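/- Let H be a Hermitian operator on ℋ^{⊗N}, ε ∈ ℝ, and {C_{ij}}_{i,j∈{0,1}} operators satisfying C_{ij}† = C_{ji}, C_{ij}C_{kl} = δ_{jk}C_{il}, and the commutation relation [H, C_{ij}] = ε(i-j)C_{ij}. Let O = I - ∑_{i,j}(-1)^{i-j}C_{ij}. Then H - O†HO = ε(C_{11} - C_{00}), and consequently [O†HO, H] = 0. -/

import Mathlib

/-!
With `s = C₀₀ - C₀₁ - C₁₀ + C₁₁` one has `O = 1 - s`, where `s` is Hermitian and `s² = 2s`, so `O`
is a Hermitian involution. For any `s` with `s² = 2s`, `H - (1 - s) H (1 - s) = K - sK` with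
`K = [H, s]`. The commutation relations give `K = ε (C₀₁ - C₁₀)`, and the matrix-unit relations
turn `K - sK` into `ε (C₁₁ - C₀₀)`, which commutes with `H` because the diagonal units do.
-/

open Matrix

/-- `O := I - ∑_{i,j∈{0,1}} (-1)^{i-j} C_{ij}`. -/
noncomputable def oOfUnits {m : Type*} [Fintype m] [DecidableEq m]
    (C : Fin 2 → Fin 2 → Matrix m m ℂ) : Matrix m m ℂ :=
  1 - ∑ i : Fin 2, ∑ j : Fin 2, ((-1 : ℂ)) ^ ((i : ℕ) + (j : ℕ)) • C i j

theorem sub_one_sub_mul_mul_one_sub {A : Type*} [Ring A] {s : A} (hs : s * s = s + s) (H : A) :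
    H - (1 - s) * H * (1 - s) = (H * s - s * H) - s * (H * s - s * H) := by
  rw [mul_sub s, ← mul_assoc s s H, hs]
  noncomm_ring

section MatrixUnits

variable {A : Type*} [Ring A] (C : Fin 2 → Fin 2 → A)

def signedUnitSum : A := C 0 0 - C 0 1 - C 1 0 + C 1 1

variable {C} (hmul : ∀ i j k l, C i j * C k l = if j = k then C i l else 0)
include hmul

theorem signedUnitSum_mul_self :
    signedUnitSum C * signedUnitSum C = signedUnitSum C + signedUnitSum C := by
  simp only [signedUnitSum, mul_add, mul_sub, add_mul, sub_mul, hmul, ↓reduceIte, one_ne_zero,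
    zero_ne_one, sub_zero, add_zero, zero_sub]
  abel

theorem sub_signedUnitSum_mul :
    (C 0 1 - C 1 0) - signedUnitSum C * (C 0 1 - C 1 0) = C 1 1 - C 0 0 := by
  simp only [signedUnitSum, mul_sub, add_mul, sub_mul, hmul, ↓reduceIte, one_ne_zero, zero_ne_one,
    sub_zero, add_zero, zero_sub]
  abel

end MatrixUnits

section Commutator

variable {R A : Type*} [CommRing R] [Ring A] [Algebra R A] {H : A} {ε : R}
  {C : Fin 2 → Fin 2 → A}
  (hcomm : ∀ i j, H * C i j - C i j * H = (ε * (((i : ℕ) : R) - ((j : ℕ) : R))) • C i j)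
include hcomm

theorem commute_diag_of_commutator_eq (i : Fin 2) : Commute H (C i i) :=
  sub_eq_zero.mp (by simpa using hcomm i i)

theorem commutator_signedUnitSum_of_commutator_eq :
    H * signedUnitSum C - signedUnitSum C * H = ε • (C 0 1 - C 1 0) :=
  calc H * signedUnitSum C - signedUnitSum C * H
      = (H * C 0 0 - C 0 0 * H) - (H * C 0 1 - C 0 1 * H) - (H * C 1 0 - C 1 0 * H)
        + (H * C 1 1 - C 1 1 * H) := by simp only [signedUnitSum]; noncomm_ring
    _ = ε • (C 0 1 - C 1 0) := by simp [hcomm]; module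

end Commutator

section oOfUnits

variable {m : Type*} [Fintype m] [DecidableEq m] {C : Fin 2 → Fin 2 → Matrix m m ℂ}

theorem oOfUnits_eq_one_sub_signedUnitSum :
    oOfUnits C = 1 - signedUnitSum C := by
  simp only [oOfUnits, signedUnitSum, Fin.sum_univ_two, Fin.val_zero, Fin.val_one, pow_zero, pow_one,
    add_zero, zero_add, one_smul, neg_smul, Nat.reduceAdd, even_two, Even.neg_pow, one_pow]
  abel

theorem conjTranspose_oOfUnits (hadj : ∀ i j, (C i j)ᴴ = C j i) :
    (oOfUnits C)ᴴ = oOfUnits C := by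
  simp only [oOfUnits_eq_one_sub_signedUnitSum, signedUnitSum, conjTranspose_sub, conjTranspose_one,
    conjTranspose_add, hadj]
  abel

end oOfUnits

theorem oOfUnits_energy_difference {m : Type*} [Fintype m] [DecidableEq m]
    (H : Matrix m m ℂ) (ε : ℝ)
    (C : Fin 2 → Fin 2 → Matrix m m ℂ)
    (hadj : ∀ i j, (C i j)ᴴ = C j i)
    (hmul : ∀ i j k l, C i j * C k l = if j = k then C i l else 0)
    (hcomm : ∀ i j, H * C i j - C i j * H
      = ((ε : ℂ) * (((i : ℕ) : ℂ) - ((j : ℕ) : ℂ))) • C i j) :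
    H - (oOfUnits C)ᴴ * H * oOfUnits C = (ε : ℂ) • (C 1 1 - C 0 0) ∧
    Commute ((oOfUnits C)ᴴ * H * oOfUnits C) H := by
  have hdiff : H - (oOfUnits C)ᴴ * H * oOfUnits C = (ε : ℂ) • (C 1 1 - C 0 0) := by
    rw [conjTranspose_oOfUnits hadj, oOfUnits_eq_one_sub_signedUnitSum,
      sub_one_sub_mul_mul_one_sub (signedUnitSum_mul_self hmul),
      commutator_signedUnitSum_of_commutator_eq hcomm, mul_smul_comm, ← smul_sub,
      sub_signedUnitSum_mul hmul]
  have hdiag : Commute H (C 1 1 - C 0 0) :=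
    (commute_diag_of_commutator_eq hcomm 1).sub_right (commute_diag_of_commutator_eq hcomm 0)
  have hconj : (oOfUnits C)ᴴ * H * oOfUnits C = H - (ε : ℂ) • (C 1 1 - C 0 0) := by
    rw [← hdiff, sub_sub_cancel]
  refine ⟨hdiff, ?_⟩
  rw [hconj]
  exact (Commute.refl H).sub_left (hdiag.symm.smul_left _)
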